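/- Let n ≥ 1 be an integer. The operator Λ^{(n)} = (1/2) Σ_{α=0}^{3} (σ_α ⊗ σ̄_α)^{⊗n} on (ℂ²)^{⊗2n} satisfies Λ^{(n)}·Λ^{(n)} = 2·Λ^{(n)}; equivalently, Λ^{(n)}/2 is a projector. -/
import Mathlib


open scoped Matrix ComplexConjugate

noncomputable section

/-- The four Pauli matrices: `σ 0 = 1`, `σ 1 = σ_x`, `σ 2 = σ_y`, `σ 3 = σ_z`. -/
def σ (α : Fin 4) : Matrix (Fin 2) (Fin 2) ℂ :=
  if α = 0 then 1
  else if α = 1 then !![0, 1; 1, 0]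
  else if α = 2 then !![0, -Complex.I; Complex.I, 0]
  else !![1, 0; 0, -1]

/-- `Λ^{(n)} = (1/2) Σ_{α=0}^{3} (σ_α ⊗ σ̄_α)^{⊗n}`, an operator on `(ℂ²)^{⊗2n}`:
the `k`-th tensor factor of `σ_α ⊗ σ̄_α` sits on qubits `2k` and `2k+1`. -/
def Lambda (n : ℕ) : Matrix (Fin (2*n) → Fin 2) (Fin (2*n) → Fin 2) ℂ :=
  fun s t => ((1:ℂ)/2) * ∑ α : Fin 4, ∏ k : Fin n,
    σ α (s ⟨2*k.val, by have := k.isLt; omega⟩) (t ⟨2*k.val, by have := k.isLt; omega⟩) *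
    conj (σ α (s ⟨2*k.val+1, by have := k.isLt; omega⟩) (t ⟨2*k.val+1, by have := k.isLt; omega⟩))

/-- Index of the product of two Pauli matrices. -/
def pmul (α β : Fin 4) : Fin 4 :=
  if α = 0 then β else if β = 0 then α else if α = β then 0
  else if α ≠ 1 ∧ β ≠ 1 then 1 else if α ≠ 2 ∧ β ≠ 2 then 2 else 3

/-- Phase of the product of two Pauli matrices. -/
def pc (α β : Fin 4) : ℂ :=
  if α = 0 ∨ β = 0 ∨ α = β then 1
  else if (α, β) ∈ [((1:Fin 4),(2:Fin 4)), (2,3), (3,1)] then Complex.I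
  else -Complex.I

lemma sigma_mul (α β : Fin 4) : σ α * σ β = pc α β • σ (pmul α β) := by
  fin_cases α <;> fin_cases β <;>
    · ext i j
      fin_cases i <;> fin_cases j <;>
        simp [σ, pc, pmul, Matrix.mul_apply, Fin.sum_univ_two, Matrix.one_apply]

lemma pc_mul_conj (α β : Fin 4) : pc α β * conj (pc α β) = 1 := by
  fin_cases α <;> fin_cases β <;> simp [pc]

lemma pmul_bij (α : Fin 4) : Function.Bijective (pmul α) := by
  revert α; decide

/-- Regrouping the `2n` qubits into `n` pairs. -/
def pairEquiv (n : ℕ) : (Fin (2*n) → Fin 2) ≃ (Fin n → Fin 2 × Fin 2) where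
  toFun u k := (u ⟨2*k.val, by have := k.isLt; omega⟩, u ⟨2*k.val+1, by have := k.isLt; omega⟩)
  invFun v i :=
    if h : i.val % 2 = 0 then (v ⟨i.val/2, by have := i.isLt; omega⟩).1
    else (v ⟨i.val/2, by have := i.isLt; omega⟩).2
  left_inv u := by
    funext i
    by_cases h : i.val % 2 = 0 <;> simp only [h, dif_pos, dif_neg, not_false_iff] <;>
      · congr 1; ext; simp; omega
  right_inv v := by
    funext k
    have h1 : (2*k.val) % 2 = 0 := by omega
    have h2 : ¬ ((2*k.val+1) % 2 = 0) := by omega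
    have e1 : (⟨(2*k.val)/2, by have := k.isLt; omega⟩ : Fin n) = k := by
      apply Fin.ext; show 2*k.val/2 = k.val; omega
    have e2 : (⟨(2*k.val+1)/2, by have := k.isLt; omega⟩ : Fin n) = k := by
      apply Fin.ext; show (2*k.val+1)/2 = k.val; omega
    ext <;> simp only [h1, h2, dif_pos, dif_neg, not_false_iff, e1, e2]

lemma sum_prod_pairs (n : ℕ) (F : Fin n → Fin 2 → Fin 2 → ℂ) :
    (∑ u : Fin (2*n) → Fin 2, ∏ k : Fin n,
      F k (u ⟨2*k.val, by have := k.isLt; omega⟩) (u ⟨2*k.val+1, by have := k.isLt; omega⟩))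
      = ∏ k : Fin n, ∑ a : Fin 2, ∑ b : Fin 2, F k a b := by
  rw [show (∏ k : Fin n, ∑ a : Fin 2, ∑ b : Fin 2, F k a b)
      = ∏ k : Fin n, ∑ p : Fin 2 × Fin 2, F k p.1 p.2 by
    refine Finset.prod_congr rfl fun k _ => ?_
    rw [Fintype.sum_prod_type]]
  rw [Fintype.prod_sum (fun k (p : Fin 2 × Fin 2) => F k p.1 p.2)]
  exact Fintype.sum_equiv (pairEquiv n) _ _ (fun u => rfl)

/-- One term `(σ_α ⊗ σ̄_α)^{⊗n}` of `Λ^{(n)}`. -/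
def P (n : ℕ) (α : Fin 4) (s t : Fin (2*n) → Fin 2) : ℂ :=
  ∏ k : Fin n,
    σ α (s ⟨2*k.val, by have := k.isLt; omega⟩) (t ⟨2*k.val, by have := k.isLt; omega⟩) *
    conj (σ α (s ⟨2*k.val+1, by have := k.isLt; omega⟩) (t ⟨2*k.val+1, by have := k.isLt; omega⟩))

lemma Lambda_eq (n : ℕ) (s t : Fin (2*n) → Fin 2) :
    Lambda n s t = ((1:ℂ)/2) * ∑ α : Fin 4, P n α s t := rfl

lemma P_mul (n : ℕ) (α β : Fin 4) (s t : Fin (2*n) → Fin 2) :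
    (∑ u : Fin (2*n) → Fin 2, P n α s u * P n β u t) = P n (pmul α β) s t := by
  have step1 : (∑ u : Fin (2*n) → Fin 2, P n α s u * P n β u t)
      = ∑ u : Fin (2*n) → Fin 2, ∏ k : Fin n,
          (fun (k : Fin n) (a b : Fin 2) =>
            (σ α (s ⟨2*k.val, by have := k.isLt; omega⟩) a *
              σ β a (t ⟨2*k.val, by have := k.isLt; omega⟩)) *
            (conj (σ α (s ⟨2*k.val+1, by have := k.isLt; omega⟩) b) *
              conj (σ β b (t ⟨2*k.val+1, by have := k.isLt; omega⟩)))) k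
          (u ⟨2*k.val, by have := k.isLt; omega⟩) (u ⟨2*k.val+1, by have := k.isLt; omega⟩) := by
    refine Finset.sum_congr rfl fun u _ => ?_
    rw [P, P, ← Finset.prod_mul_distrib]
    exact Finset.prod_congr rfl fun k _ => by ring
  rw [step1, sum_prod_pairs n (fun (k : Fin n) (a b : Fin 2) =>
    (σ α (s ⟨2*k.val, by have := k.isLt; omega⟩) a *
      σ β a (t ⟨2*k.val, by have := k.isLt; omega⟩)) *
    (conj (σ α (s ⟨2*k.val+1, by have := k.isLt; omega⟩) b) *
      conj (σ β b (t ⟨2*k.val+1, by have := k.isLt; omega⟩))))]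
  refine Finset.prod_congr rfl fun k _ => ?_
  beta_reduce
  rw [← Finset.sum_mul_sum]
  have hA : (∑ a : Fin 2, σ α (s ⟨2*k.val, by have := k.isLt; omega⟩) a *
        σ β a (t ⟨2*k.val, by have := k.isLt; omega⟩))
      = pc α β * σ (pmul α β) (s ⟨2*k.val, by have := k.isLt; omega⟩)
          (t ⟨2*k.val, by have := k.isLt; omega⟩) := by
    rw [← Matrix.mul_apply, sigma_mul]; simp
  have hB : (∑ b : Fin 2, conj (σ α (s ⟨2*k.val+1, by have := k.isLt; omega⟩) b) *
        conj (σ β b (t ⟨2*k.val+1, by have := k.isLt; omega⟩)))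
      = conj (pc α β) * conj (σ (pmul α β) (s ⟨2*k.val+1, by have := k.isLt; omega⟩)
          (t ⟨2*k.val+1, by have := k.isLt; omega⟩)) := by
    rw [← map_mul]
    rw [show (∑ b : Fin 2, conj (σ α (s ⟨2*k.val+1, by have := k.isLt; omega⟩) b) *
        conj (σ β b (t ⟨2*k.val+1, by have := k.isLt; omega⟩)))
      = conj (∑ b : Fin 2, σ α (s ⟨2*k.val+1, by have := k.isLt; omega⟩) b *
        σ β b (t ⟨2*k.val+1, by have := k.isLt; omega⟩)) by simp]
    rw [← Matrix.mul_apply, sigma_mul]; simp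
  rw [hA, hB]
  calc pc α β * σ (pmul α β) (s ⟨2*k.val, by have := k.isLt; omega⟩)
          (t ⟨2*k.val, by have := k.isLt; omega⟩) *
        (conj (pc α β) * conj (σ (pmul α β) (s ⟨2*k.val+1, by have := k.isLt; omega⟩)
          (t ⟨2*k.val+1, by have := k.isLt; omega⟩)))
      = (pc α β * conj (pc α β)) * (σ (pmul α β) (s ⟨2*k.val, by have := k.isLt; omega⟩)
          (t ⟨2*k.val, by have := k.isLt; omega⟩) *
        conj (σ (pmul α β) (s ⟨2*k.val+1, by have := k.isLt; omega⟩)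
          (t ⟨2*k.val+1, by have := k.isLt; omega⟩))) := by ring
    _ = _ := by rw [pc_mul_conj]; ring

/-- `Λ^{(n)} · Λ^{(n)} = 2 · Λ^{(n)}`, i.e. `Λ^{(n)}/2` is a projector. -/
theorem lambda_mul_lambda (n : ℕ) (hn : 1 ≤ n) :
    Lambda n * Lambda n = (2:ℂ) • Lambda n := by
  ext s t
  rw [Matrix.mul_apply, Matrix.smul_apply, Lambda_eq, smul_eq_mul]
  calc (∑ u : Fin (2*n) → Fin 2, Lambda n s u * Lambda n u t)
      = ∑ u : Fin (2*n) → Fin 2, ((1:ℂ)/4) * ∑ α : Fin 4, ∑ β : Fin 4,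
          P n α s u * P n β u t := by
        refine Finset.sum_congr rfl fun u _ => ?_
        rw [Lambda_eq, Lambda_eq, ← Finset.sum_mul_sum]
        ring
    _ = ((1:ℂ)/4) * ∑ α : Fin 4, ∑ β : Fin 4, ∑ u : Fin (2*n) → Fin 2,
          P n α s u * P n β u t := by
        rw [← Finset.mul_sum, Finset.sum_comm]
        congr 1
        exact Finset.sum_congr rfl fun α _ => Finset.sum_comm
    _ = ((1:ℂ)/4) * ∑ α : Fin 4, ∑ β : Fin 4, P n (pmul α β) s t := by
        congr 1
        exact Finset.sum_congr rfl fun α _ =>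
          Finset.sum_congr rfl fun β _ => P_mul n α β s t
    _ = ((1:ℂ)/4) * ∑ _α : Fin 4, ∑ γ : Fin 4, P n γ s t := by
        congr 1
        exact Finset.sum_congr rfl fun α _ =>
          Fintype.sum_bijective (pmul α) (pmul_bij α) _ _ (fun β => rfl)
    _ = 2 * (((1:ℂ)/2) * ∑ α : Fin 4, P n α s t) := by
        simp only [Finset.sum_const, Finset.card_univ, Fintype.card_fin, nsmul_eq_mul,
          Nat.cast_ofNat]
        ring
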